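/- arXiv:2404.07061 — 4 statements merged into one kernel-verified Lean document; each statement's English description precedes it below -/
import Mathlib

section
/- Let x, y : Fin n → Bool with exactly k zeros each (so |x|₁ = |y|₁ = n−k), and let 0 ≤ ℓ ≤ min(k, n−k). Let z be obtained from y by flipping a uniformly random set of ℓ positions among the k zero-positions of y and a uniformly random set of ℓ positions among the n−k one-positions of y. Then E[H(x,z)] = 2ℓ + (1 − ℓn/(k(n−k))) · H(x,y). -/
open Finset

/-- Hamming distance of two bitstrings. -/
def hammingDist' {n : ℕ} (x y : Fin n → Bool) : ℕ :=
  (Finset.univ.filter fun r => x r ≠ y r).card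

/-- Flip the bits of `y` at the positions in `A`. -/
def flipOn {n : ℕ} (y : Fin n → Bool) (A : Finset (Fin n)) : Fin n → Bool :=
  fun r => if r ∈ A then !(y r) else y r


lemma count_mem_ps {α : Type*} [DecidableEq α] (s : Finset α) (a : α) (ha : a ∈ s) (m : ℕ) :
    ((s.powersetCard (m+1)).filter (fun A => a ∈ A)).card = (s.card - 1).choose m := by
  have h1 : (s.powersetCard (m+1)).filter (fun A => ¬ a ∈ A)
      = (s.erase a).powersetCard (m+1) := by
    ext A
    simp only [mem_filter, mem_powersetCard, subset_erase]
    tauto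
  have h2 := Finset.card_filter_add_card_filter_not
    (s := s.powersetCard (m+1)) (p := fun A => a ∈ A)
  rw [h1, card_powersetCard, card_powersetCard, card_erase_of_mem ha] at h2
  have hc : s.card - 1 + 1 = s.card := Nat.succ_pred_eq_of_pos (card_pos.2 ⟨a, ha⟩)
  have h3 : s.card.choose (m+1) = (s.card - 1).choose m + (s.card - 1).choose (m+1) := by
    conv_lhs => rw [← hc]
    rw [Nat.choose_succ_succ]
  omega

lemma sum_inter_card {α : Type*} [DecidableEq α] (s T : Finset α) (m : ℕ) :
    ∑ A ∈ s.powersetCard (m+1), ((T ∩ A).card : ℝ)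
      = (T ∩ s).card * (s.card - 1).choose m := by
  have h1 : ∀ A, ((T ∩ A).card : ℝ) = ∑ t ∈ T, if t ∈ A then (1:ℝ) else 0 := by
    intro A
    rw [Finset.sum_boole, Finset.filter_mem_eq_inter]
  calc ∑ A ∈ s.powersetCard (m+1), ((T ∩ A).card : ℝ)
      = ∑ A ∈ s.powersetCard (m+1), ∑ t ∈ T, if t ∈ A then (1:ℝ) else 0 := by
        exact Finset.sum_congr rfl fun A _ => h1 A
    _ = ∑ t ∈ T, ∑ A ∈ s.powersetCard (m+1), if t ∈ A then (1:ℝ) else 0 :=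
        Finset.sum_comm
    _ = ∑ t ∈ T, if t ∈ s then (((s.card - 1).choose m : ℕ) : ℝ) else 0 := by
        refine Finset.sum_congr rfl fun t _ => ?_
        by_cases ht : t ∈ s
        · rw [Finset.sum_boole, if_pos ht, count_mem_ps s t ht m]
        · rw [if_neg ht]
          refine Finset.sum_eq_zero fun A hA => ?_
          have : t ∉ A := fun h => ht ((mem_powersetCard.mp hA).1 h)
          simp [this]
    _ = ∑ t ∈ T ∩ s, (((s.card - 1).choose m : ℕ) : ℝ) := (Finset.sum_ite_mem _ _ _)
    _ = (T ∩ s).card * (s.card - 1).choose m := by rw [Finset.sum_const]; push_cast; ring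

lemma ham_flip {n : ℕ} (x y : Fin n → Bool) (S : Finset (Fin n)) :
    ((Finset.univ.filter fun r => x r ≠ flipOn y S r).card : ℝ)
      = (((Finset.univ.filter fun r => x r = y r) ∩ S).card : ℝ)
        + ((Finset.univ.filter fun r => x r ≠ y r).card : ℝ)
        - (((Finset.univ.filter fun r => x r ≠ y r) ∩ S).card : ℝ) := by
  have hset : (Finset.univ.filter fun r => x r ≠ flipOn y S r)
      = ((Finset.univ.filter fun r => x r = y r) ∩ S)
        ∪ ((Finset.univ.filter fun r => x r ≠ y r) \ S) := by
    ext r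
    rw [Finset.mem_filter]
    by_cases h : r ∈ S <;>
      simp only [flipOn, h, if_pos, if_neg, mem_filter, mem_union, mem_inter, mem_sdiff,
        mem_univ, true_and, not_false_iff, and_true, not_true, and_false, or_false,
        false_or, if_true, if_false] <;>
      cases hx : x r <;> cases hy : y r <;> simp [h]
  have hdisj : Disjoint ((Finset.univ.filter fun r => x r = y r) ∩ S)
      ((Finset.univ.filter fun r => x r ≠ y r) \ S) := by
    rw [Finset.disjoint_left]
    intro r hr hr'
    simp only [mem_inter, mem_sdiff, mem_filter, mem_univ, true_and] at hr hr'
    exact hr'.1 hr.1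
  have hsd : ((Finset.univ.filter fun r => x r ≠ y r) \ S).card
      + ((Finset.univ.filter fun r => x r ≠ y r) ∩ S).card
      = (Finset.univ.filter fun r => x r ≠ y r).card :=
    Finset.card_sdiff_add_card_inter _ _
  rw [hset, Finset.card_union_of_disjoint hdisj]
  push_cast
  have := congrArg (Nat.cast : ℕ → ℝ) hsd
  push_cast at this
  linarith


theorem stmt_1 (n k ℓ : ℕ) (hk0 : 0 < k) (hkn : k < n)
    (hℓ : ℓ ≤ min k (n - k))
    (x y : Fin n → Bool)
    (hx : (Finset.univ.filter fun r => x r = false).card = k)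
    (hy : (Finset.univ.filter fun r => y r = false).card = k) :
    (∑ A ∈ (Finset.univ.filter fun r => y r = false).powersetCard ℓ,
        ∑ B ∈ (Finset.univ.filter fun r => y r = true).powersetCard ℓ,
          (hammingDist' x (flipOn y (A ∪ B)) : ℝ)) /
      ((((Finset.univ.filter fun r => y r = false).powersetCard ℓ).card : ℝ) *
        (((Finset.univ.filter fun r => y r = true).powersetCard ℓ).card : ℝ)) =
      2 * ℓ + (1 - (ℓ * n : ℝ) / (k * (n - k))) * (hammingDist' x y : ℝ) := by
  have hℓk : ℓ ≤ k := le_trans hℓ (min_le_left _ _)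
  have hℓnk : ℓ ≤ n - k := le_trans hℓ (min_le_right _ _)
  have hhd : hammingDist' x y = (Finset.univ.filter fun r => x r ≠ y r).card := rfl
  set Z : Finset (Fin n) := Finset.univ.filter fun r => y r = false with hZdef
  set O : Finset (Fin n) := Finset.univ.filter fun r => y r = true with hOdef
  set E : Finset (Fin n) := Finset.univ.filter fun r => x r = y r with hEdef
  set D : Finset (Fin n) := Finset.univ.filter fun r => x r ≠ y r with hDdef
  have hZO : Disjoint Z O := by
    rw [Finset.disjoint_left]
    intro r hr hr'
    simp only [hZdef, hOdef, mem_filter, mem_univ, true_and] at hr hr'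
    rw [hr] at hr'; exact Bool.false_ne_true hr'
  have hZcard : Z.card = k := hy
  have hZOcard : Z.card + O.card = n := by
    have h1 : Z ∪ O = Finset.univ := by
      ext r
      simp only [hZdef, hOdef, mem_union, mem_filter, mem_univ, true_and, iff_true]
      exact (Bool.eq_false_or_eq_true (y r)).symm
    have := Finset.card_union_of_disjoint hZO
    rw [h1, Finset.card_univ, Fintype.card_fin] at this
    omega
  have hOcard : O.card = n - k := by omega
  have hEDZ : (E ∩ Z).card + (D ∩ Z).card = k := by
    have h1 : (E ∩ Z) ∪ (D ∩ Z) = Z := by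
      ext r
      simp only [hEdef, hDdef, mem_union, mem_inter, mem_filter, mem_univ, true_and]
      tauto
    have hd : Disjoint (E ∩ Z) (D ∩ Z) := by
      rw [Finset.disjoint_left]
      intro r hr hr'
      simp only [hEdef, hDdef, mem_inter, mem_filter, mem_univ, true_and] at hr hr'
      exact hr'.1 hr.1
    have := Finset.card_union_of_disjoint hd
    rw [h1, hZcard] at this
    omega
  have hEDO : (E ∩ O).card + (D ∩ O).card = n - k := by
    have h1 : (E ∩ O) ∪ (D ∩ O) = O := by
      ext r
      simp only [hEdef, hDdef, mem_union, mem_inter, mem_filter, mem_univ, true_and]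
      tauto
    have hd : Disjoint (E ∩ O) (D ∩ O) := by
      rw [Finset.disjoint_left]
      intro r hr hr'
      simp only [hEdef, hDdef, mem_inter, mem_filter, mem_univ, true_and] at hr hr'
      exact hr'.1 hr.1
    have := Finset.card_union_of_disjoint hd
    rw [h1, hOcard] at this
    omega
  have hDsplit : (D ∩ Z).card + (D ∩ O).card = D.card := by
    have h1 : (D ∩ Z) ∪ (D ∩ O) = D := by
      ext r
      simp only [hDdef, hZdef, hOdef, mem_union, mem_inter, mem_filter, mem_univ, true_and]
      constructor
      · tauto
      · intro h
        rcases Bool.eq_false_or_eq_true (y r) with h' | h' <;> tauto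
    have hd : Disjoint (D ∩ Z) (D ∩ O) :=
      (hZO.mono inter_subset_right inter_subset_right)
    have := Finset.card_union_of_disjoint hd
    rw [h1] at this
    omega
  have hd01 : (D ∩ Z).card = (D ∩ O).card := by
    have hDZ : D ∩ Z = Finset.univ.filter fun r => x r = true ∧ y r = false := by
      ext r
      simp only [hDdef, hZdef, mem_inter, mem_filter, mem_univ, true_and]
      cases hxr : x r <;> cases hyr : y r <;> simp
    have hDO : D ∩ O = Finset.univ.filter fun r => x r = false ∧ y r = true := by
      ext r
      simp only [hDdef, hOdef, mem_inter, mem_filter, mem_univ, true_and]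
      cases hxr : x r <;> cases hyr : y r <;> simp
    have hsplit : ∀ (p : Fin n → Prop) (_ : DecidablePred p),
        (Finset.univ.filter fun r => p r ∧ y r = false).card
        + (Finset.univ.filter fun r => p r ∧ y r = true).card
        = (Finset.univ.filter fun r => p r).card := by
      intro p _
      have h1 : (Finset.univ.filter fun r => p r ∧ y r = false)
          ∪ (Finset.univ.filter fun r => p r ∧ y r = true)
          = Finset.univ.filter fun r => p r := by
        ext r
        simp only [mem_union, mem_filter, mem_univ, true_and]
        constructor
        · tauto
        · intro h
          rcases Bool.eq_false_or_eq_true (y r) with h' | h' <;> tauto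
      have hd : Disjoint (Finset.univ.filter fun r => p r ∧ y r = false)
          (Finset.univ.filter fun r => p r ∧ y r = true) := by
        rw [Finset.disjoint_left]
        intro r hr hr'
        simp only [mem_filter, mem_univ, true_and] at hr hr'
        rw [hr.2] at hr'
        exact Bool.false_ne_true hr'.2
      have := Finset.card_union_of_disjoint hd
      rw [h1] at this
      omega
    have hsplit2 : ∀ (p : Fin n → Prop) (_ : DecidablePred p),
        (Finset.univ.filter fun r => x r = false ∧ p r).card
        + (Finset.univ.filter fun r => x r = true ∧ p r).card
        = (Finset.univ.filter fun r => p r).card := by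
      intro p _
      have h1 : (Finset.univ.filter fun r => x r = false ∧ p r)
          ∪ (Finset.univ.filter fun r => x r = true ∧ p r)
          = Finset.univ.filter fun r => p r := by
        ext r
        simp only [mem_union, mem_filter, mem_univ, true_and]
        constructor
        · tauto
        · intro h
          rcases Bool.eq_false_or_eq_true (x r) with h' | h' <;> tauto
      have hd : Disjoint (Finset.univ.filter fun r => x r = false ∧ p r)
          (Finset.univ.filter fun r => x r = true ∧ p r) := by
        rw [Finset.disjoint_left]
        intro r hr hr'
        simp only [mem_filter, mem_univ, true_and] at hr hr'
        rw [hr.1] at hr'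
        exact Bool.false_ne_true hr'.1
      have := Finset.card_union_of_disjoint hd
      rw [h1] at this
      omega
    have h1 := hsplit (fun r => x r = false) (by infer_instance)
    have h2 := hsplit2 (fun r => y r = false) (by infer_instance)
    rw [hx] at h1
    rw [hy] at h2
    rw [hDZ, hDO]
    omega
  -- case ℓ = 0
  rcases Nat.eq_zero_or_pos ℓ with hℓ0 | hℓpos
  · subst hℓ0
    have hfl : flipOn y (∅ ∪ ∅) = y := by
      funext r; simp [flipOn]
    simp only [Finset.powersetCard_zero, Finset.sum_singleton, hfl, Finset.card_singleton]
    push_cast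
    ring
  obtain ⟨m, rfl⟩ : ∃ m, ℓ = m + 1 := ⟨ℓ - 1, by omega⟩
  -- pointwise hamming value
  have key : ∀ A ∈ Z.powersetCard (m+1), ∀ B ∈ O.powersetCard (m+1),
      (hammingDist' x (flipOn y (A ∪ B)) : ℝ)
        = (((E ∩ A).card : ℝ) - ((D ∩ A).card : ℝ))
          + ((((E ∩ B).card : ℝ) - ((D ∩ B).card : ℝ)) + (hammingDist' x y : ℝ)) := by
    intro A hA B hB
    have hAZ : A ⊆ Z := (mem_powersetCard.mp hA).1
    have hBO : B ⊆ O := (mem_powersetCard.mp hB).1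
    have hAB : Disjoint A B := hZO.mono hAZ hBO
    have hEc : (E ∩ (A ∪ B)).card = (E ∩ A).card + (E ∩ B).card := by
      rw [Finset.inter_union_distrib_left]
      exact Finset.card_union_of_disjoint (hAB.mono inter_subset_right inter_subset_right)
    have hDc : (D ∩ (A ∪ B)).card = (D ∩ A).card + (D ∩ B).card := by
      rw [Finset.inter_union_distrib_left]
      exact Finset.card_union_of_disjoint (hAB.mono inter_subset_right inter_subset_right)
    have h1 : (hammingDist' x (flipOn y (A ∪ B)) : ℝ)
        = ((E ∩ (A ∪ B)).card : ℝ) + ((hammingDist' x y : ℕ) : ℝ)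
          - ((D ∩ (A ∪ B)).card : ℝ) := by
      rw [show hammingDist' x (flipOn y (A ∪ B))
          = (Finset.univ.filter fun r => x r ≠ flipOn y (A ∪ B) r).card from rfl,
        ham_flip x y (A ∪ B), hhd]
    rw [h1, hEc, hDc]
    push_cast
    ring
  rw [Finset.sum_congr rfl fun A hA => Finset.sum_congr rfl fun B hB => key A hA B hB]
  -- compute sums
  have hSEB : ∑ B ∈ O.powersetCard (m+1), ((E ∩ B).card : ℝ)
      = ((E ∩ O).card : ℝ) * ((O.card - 1).choose m : ℝ) := sum_inter_card O E m
  have hSDB : ∑ B ∈ O.powersetCard (m+1), ((D ∩ B).card : ℝ)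
      = ((D ∩ O).card : ℝ) * ((O.card - 1).choose m : ℝ) := sum_inter_card O D m
  have hSEA : ∑ A ∈ Z.powersetCard (m+1), ((E ∩ A).card : ℝ)
      = ((E ∩ Z).card : ℝ) * ((Z.card - 1).choose m : ℝ) := sum_inter_card Z E m
  have hSDA : ∑ A ∈ Z.powersetCard (m+1), ((D ∩ A).card : ℝ)
      = ((D ∩ Z).card : ℝ) * ((Z.card - 1).choose m : ℝ) := sum_inter_card Z D m
  have hinner : ∀ A : Finset (Fin n),
      ∑ B ∈ O.powersetCard (m+1),
        ((((E ∩ A).card : ℝ) - ((D ∩ A).card : ℝ))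
          + ((((E ∩ B).card : ℝ) - ((D ∩ B).card : ℝ)) + (hammingDist' x y : ℝ)))
      = (((O.powersetCard (m+1)).card : ℝ) * ((E ∩ A).card : ℝ)
          - ((O.powersetCard (m+1)).card : ℝ) * ((D ∩ A).card : ℝ))
        + (((O.powersetCard (m+1)).card : ℝ) * (hammingDist' x y : ℝ)
            + (((E ∩ O).card : ℝ) * ((O.card - 1).choose m : ℝ)
              - ((D ∩ O).card : ℝ) * ((O.card - 1).choose m : ℝ))) := by
    intro A
    simp only [Finset.sum_add_distrib, Finset.sum_sub_distrib, Finset.sum_const,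
      nsmul_eq_mul, hSEB, hSDB]
    ring
  rw [Finset.sum_congr rfl fun A _ => hinner A]
  simp only [Finset.sum_add_distrib, Finset.sum_sub_distrib, ← Finset.mul_sum,
    hSEA, hSDA, Finset.sum_const, nsmul_eq_mul]
  rw [Finset.card_powersetCard, Finset.card_powersetCard, hZcard, hOcard]
  -- arithmetic endgame
  have hCZpos : (0:ℝ) < (k.choose (m+1) : ℝ) := by
    exact_mod_cast Nat.choose_pos hℓk
  have hCOpos : (0:ℝ) < ((n-k).choose (m+1) : ℝ) := by
    exact_mod_cast Nat.choose_pos hℓnk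
  have hkR : (0:ℝ) < (k : ℝ) := by exact_mod_cast hk0
  have hMR : (0:ℝ) < ((n-k : ℕ) : ℝ) := by
    have : 0 < n - k := by omega
    exact_mod_cast this
  have hc1 : (k:ℝ) * ((k-1).choose m : ℝ) = (k.choose (m+1) : ℝ) * ((m:ℝ)+1) := by
    have h := Nat.add_one_mul_choose_eq (k-1) m
    have hk1 : k - 1 + 1 = k := by omega
    rw [hk1] at h
    exact_mod_cast h
  have hc2 : ((n-k:ℕ):ℝ) * ((n-k-1).choose m : ℝ)
      = ((n-k).choose (m+1) : ℝ) * ((m:ℝ)+1) := by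
    have h := Nat.add_one_mul_choose_eq (n-k-1) m
    have hk1 : n - k - 1 + 1 = n - k := by omega
    rw [hk1] at h
    exact_mod_cast h
  have hcZ : ((k-1).choose m : ℝ) = (k.choose (m+1) : ℝ) * ((m:ℝ)+1) / k := by
    rw [eq_div_iff hkR.ne']; linarith
  have hcO : ((n-k-1).choose m : ℝ)
      = ((n-k).choose (m+1) : ℝ) * ((m:ℝ)+1) / ((n-k:ℕ):ℝ) := by
    rw [eq_div_iff hMR.ne']; linarith
  have hcast1 : ((E ∩ Z).card : ℝ) = (k:ℝ) - ((D ∩ O).card : ℝ) := by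
    have h1 : ((E ∩ Z).card : ℝ) + ((D ∩ Z).card : ℝ) = (k:ℝ) := by exact_mod_cast hEDZ
    have h2 : ((D ∩ Z).card : ℝ) = ((D ∩ O).card : ℝ) := by exact_mod_cast hd01
    linarith
  have hcast2 : ((E ∩ O).card : ℝ) = ((n-k:ℕ):ℝ) - ((D ∩ O).card : ℝ) := by
    have h1 : ((E ∩ O).card : ℝ) + ((D ∩ O).card : ℝ) = ((n-k:ℕ):ℝ) := by
      exact_mod_cast hEDO
    linarith
  have hcast3 : ((D ∩ Z).card : ℝ) = ((D ∩ O).card : ℝ) := by exact_mod_cast hd01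
  have hcast4 : ((hammingDist' x y : ℕ) : ℝ) = 2 * ((D ∩ O).card : ℝ) := by
    have h1 : hammingDist' x y = D.card := by rw [hhd, hDdef]
    have h2 : ((D ∩ Z).card : ℝ) + ((D ∩ O).card : ℝ) = (D.card : ℝ) := by
      exact_mod_cast hDsplit
    rw [h1]
    linarith
  have hM : ((n - k : ℕ) : ℝ) = (n:ℝ) - (k:ℝ) := by
    have := Nat.cast_sub hkn.le (R := ℝ)
    exact this
  have hn : ((n:ℕ):ℝ) = (k:ℝ) + ((n-k:ℕ):ℝ) := by rw [hM]; ring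
  rw [hcast1, hcast2, hcast3, hcast4, hcZ, hcO, ← hM]
  rw [hn]
  push_cast
  field_simp
  ring
end

section
/- Let P = {x_1,…,x_μ} be a population of μ bitstrings of length n and y ∈ {0,1}^n a fixed bitstring. Let P' be obtained from P by replacing x_d with y, where d is uniform on {1,…,μ}. Then E[S(P')] = (1 − 2/μ) · S(P) + (2(μ−1)/μ) · S_P(y), where S_P(y) = Σ_{i=1}^μ H(x_i, y). -/
open Finset

/-- Population diversity: sum of Hamming distances over all ordered pairs. -/
def popDiv {n μ : ℕ} (P : Fin μ → Fin n → Bool) : ℕ :=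
  ∑ i : Fin μ, ∑ j : Fin μ, hammingDist' (P i) (P j)

lemma hd_symm {n : ℕ} (x y : Fin n → Bool) : hammingDist' x y = hammingDist' y x := by
  unfold hammingDist'
  congr 1
  apply Finset.filter_congr
  intro r _
  simp [ne_comm]

lemma hd_self {n : ℕ} (x : Fin n → Bool) : hammingDist' x x = 0 := by
  simp [hammingDist']

lemma sum_update_comp {μ : ℕ} {α : Type*} (d : Fin μ) (P : Fin μ → α) (c : α)
    (g : α → ℝ) :
    ∑ i : Fin μ, g (Function.update P d c i) = ∑ i : Fin μ, g (P i) - g (P d) + g c := by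
  have h1 : ∀ i : Fin μ, g (Function.update P d c i) = Function.update (g ∘ P) d (g c) i := by
    intro i
    by_cases h : i = d
    · subst h; simp
    · simp [Function.update_of_ne h]
  rw [Finset.sum_congr rfl (fun i _ => h1 i)]
  rw [Finset.sum_update_of_mem (Finset.mem_univ d)]
  have h2 : ∑ i : Fin μ, (g ∘ P) i = g (P d) + ∑ i ∈ Finset.univ \ {d}, (g ∘ P) i := by
    rw [Finset.sum_eq_sum_sdiff_singleton_add (Finset.mem_univ d)]
    simp only [Function.comp_apply]
    ring
  have h3 : ∑ i : Fin μ, g (P i) = ∑ i : Fin μ, (g ∘ P) i := rfl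
  rw [h3, h2]
  simp only [Function.comp_apply]
  ring

theorem stmt_2 (n μ : ℕ) (hμ : 0 < μ) (P : Fin μ → Fin n → Bool)
    (y : Fin n → Bool) :
    (∑ d : Fin μ, (popDiv (Function.update P d y) : ℝ)) / μ =
      (1 - 2 / μ) * (popDiv P : ℝ) +
        (2 * (μ - 1) / μ) * ∑ i : Fin μ, (hammingDist' (P i) y : ℝ) := by
  set S : ℝ := (popDiv P : ℝ) with hS
  set B : ℝ := ∑ i : Fin μ, (hammingDist' (P i) y : ℝ) with hB
  have hBsymm : B = ∑ i : Fin μ, (hammingDist' y (P i) : ℝ) := by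
    rw [hB]; exact Finset.sum_congr rfl (fun i _ => by rw [hd_symm])
  -- per-d formula
  have key : ∀ d : Fin μ, (popDiv (Function.update P d y) : ℝ) =
      S - 2 * (∑ j : Fin μ, (hammingDist' (P d) (P j) : ℝ))
        + 2 * B - 2 * (hammingDist' y (P d) : ℝ) := by
    intro d
    have hcast : (popDiv (Function.update P d y) : ℝ) =
        ∑ i : Fin μ, ∑ j : Fin μ,
          (hammingDist' (Function.update P d y i) (Function.update P d y j) : ℝ) := by
      unfold popDiv; push_cast; rfl
    rw [hcast]
    have inner : ∀ x : Fin n → Bool,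
        ∑ j : Fin μ, (hammingDist' x (Function.update P d y j) : ℝ) =
          ∑ j : Fin μ, (hammingDist' x (P j) : ℝ) - (hammingDist' x (P d) : ℝ)
            + (hammingDist' x y : ℝ) := by
      intro x
      exact sum_update_comp d P y (fun z => (hammingDist' x z : ℝ))
    have outer := sum_update_comp d P y
      (fun x => ∑ j : Fin μ, (hammingDist' x (Function.update P d y j) : ℝ))
    rw [outer]
    rw [inner (P d), inner y]
    rw [Finset.sum_congr rfl (fun i _ => inner (P i))]
    simp only [Finset.sum_add_distrib, Finset.sum_sub_distrib]
    have e1 : ∑ i : Fin μ, ∑ j : Fin μ, (hammingDist' (P i) (P j) : ℝ) = S := by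
      rw [hS]; unfold popDiv; push_cast; rfl
    have e2 : ∑ i : Fin μ, (hammingDist' (P i) (P d) : ℝ) =
        ∑ j : Fin μ, (hammingDist' (P d) (P j) : ℝ) :=
      Finset.sum_congr rfl (fun i _ => by rw [hd_symm])
    have e3 : ∑ i : Fin μ, (hammingDist' (P i) y : ℝ) = B := rfl
    have e4 : (hammingDist' (P d) (P d) : ℝ) = 0 := by rw [hd_self]; norm_num
    have e5 : (hammingDist' y y : ℝ) = 0 := by rw [hd_self]; norm_num
    have e6 : (hammingDist' (P d) y : ℝ) = (hammingDist' y (P d) : ℝ) := by rw [hd_symm]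
    have e7 : ∑ j : Fin μ, (hammingDist' y (P j) : ℝ) = B := hBsymm.symm
    rw [e1, e2, e3, e4, e5, e6, e7]
    ring
  rw [Finset.sum_congr rfl (fun d _ => key d)]
  have sA : ∑ d : Fin μ, (∑ j : Fin μ, (hammingDist' (P d) (P j) : ℝ)) = S := by
    rw [hS]; unfold popDiv; push_cast; rfl
  have sC : ∑ d : Fin μ, (hammingDist' y (P d) : ℝ) = B := hBsymm.symm
  have expand : ∑ d : Fin μ,
      (S - 2 * (∑ j : Fin μ, (hammingDist' (P d) (P j) : ℝ)) + 2 * B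
        - 2 * (hammingDist' y (P d) : ℝ)) =
      (μ : ℝ) * S - 2 * S + 2 * (μ : ℝ) * B - 2 * B := by
    simp only [Finset.sum_add_distrib, Finset.sum_sub_distrib, ← Finset.mul_sum]
    rw [sA, sC]
    simp only [Finset.sum_const, Finset.card_univ, Fintype.card_fin, nsmul_eq_mul]
    ring
  rw [expand]
  have hμ' : (μ : ℝ) ≠ 0 := Nat.cast_ne_zero.mpr hμ.ne'
  field_simp
  ring
end

section
/- Fix a position r ∈ Fin n, a population P = {x_1,…,x_μ} of bitstrings, and two bitstrings y, z with y_r ≠ z_r. Let m be the number of members of P whose bit at position r equals z_r. Let P_1 (resp. P_2) be obtained from P by replacing x_d with y (resp. with z), for the same uniform random index d ∈ {1,…,μ}. Then E[S_r(P_2)] = E[S_r(P_1)] + 2μ − 4m(1 − 1/μ) − 2, and in particular E[S_r(P_2)] ≥ E[S_r(P_1)] − 2(μ−1). -/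
open Finset

/-- Number of ordered pairs of population members differing at position `r`. -/
def Sr {n μ : ℕ} (Q : Fin μ → Fin n → Bool) (r : Fin n) : ℕ :=
  ∑ i : Fin μ, ∑ j : Fin μ, if Q i r ≠ Q j r then 1 else 0

lemma sr_eq {n μ : ℕ} (Q : Fin μ → Fin n → Bool) (r : Fin n) (b : Bool) :
    Sr Q r = 2 * (univ.filter fun i => Q i r = b).card *
      (μ - (univ.filter fun i => Q i r = b).card) := by
  classical
  set c := (univ.filter fun i : Fin μ => Q i r = b).card with hc
  have hcompl : (univ.filter fun i : Fin μ => ¬ (Q i r = b)).card = μ - c := by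
    have := Finset.card_filter_add_card_filter_not
      (s := (univ : Finset (Fin μ))) (p := fun i => Q i r = b)
    simp only [Finset.card_univ, Fintype.card_fin] at this
    omega
  unfold Sr
  rw [← Finset.sum_filter_add_sum_filter_not univ (fun i => Q i r = b)]
  have h1 : ∀ i ∈ univ.filter (fun i : Fin μ => Q i r = b),
      (∑ j, if Q i r ≠ Q j r then 1 else 0) = μ - c := by
    intro i hi
    simp only [mem_filter] at hi
    rw [← hcompl, Finset.card_filter]
    apply Finset.sum_congr rfl
    intro j _
    have h2 := hi.2
    cases hqi : Q i r <;> cases hqj : Q j r <;> cases b <;> simp_all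
  have h2 : ∀ i ∈ univ.filter (fun i : Fin μ => ¬ (Q i r = b)),
      (∑ j, if Q i r ≠ Q j r then 1 else 0) = c := by
    intro i hi
    simp only [mem_filter] at hi
    rw [hc, Finset.card_filter]
    apply Finset.sum_congr rfl
    intro j _
    have h2 := hi.2
    cases hqi : Q i r <;> cases hqj : Q j r <;> cases b <;> simp_all
  rw [Finset.sum_congr rfl h1, Finset.sum_congr rfl h2]
  rw [Finset.sum_const, Finset.sum_const, hcompl, ← hc]
  simp only [smul_eq_mul]
  ring

theorem stmt_3 (n μ : ℕ) (hμ : 0 < μ) (r : Fin n)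
    (P : Fin μ → Fin n → Bool) (y z : Fin n → Bool) (hyz : y r ≠ z r)
    (m : ℕ) (hm : m = (Finset.univ.filter fun i : Fin μ => P i r = z r).card) :
    (∑ d : Fin μ, (Sr (Function.update P d z) r : ℝ)) / μ =
      (∑ d : Fin μ, (Sr (Function.update P d y) r : ℝ)) / μ +
        2 * μ - 4 * m * (1 - 1 / μ) - 2 ∧
    (∑ d : Fin μ, (Sr (Function.update P d z) r : ℝ)) / μ ≥
      (∑ d : Fin μ, (Sr (Function.update P d y) r : ℝ)) / μ - 2 * (μ - 1) := by
  classical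
  have hmμ : m ≤ μ := by
    rw [hm]
    exact (Finset.card_filter_le _ _).trans (by simp)
  -- counts after updating with z
  have cntz : ∀ d : Fin μ,
      (univ.filter fun i => Function.update P d z i r = z r).card =
        if P d r = z r then m else m + 1 := by
    intro d
    have hset : (univ.filter fun i => Function.update P d z i r = z r) =
        insert d (univ.filter fun i => P i r = z r) := by
      ext i
      by_cases h : i = d <;> simp [Function.update, h]
    rw [hset]
    by_cases h : P d r = z r
    · rw [Finset.card_insert_of_mem (by simp [h]), if_pos h, hm]
    · rw [Finset.card_insert_of_notMem (by simp [h]), if_neg h, hm]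
  have cnty : ∀ d : Fin μ,
      (univ.filter fun i => Function.update P d y i r = z r).card =
        if P d r = z r then m - 1 else m := by
    intro d
    have hset : (univ.filter fun i => Function.update P d y i r = z r) =
        (univ.filter fun i => P i r = z r).erase d := by
      ext i
      by_cases h : i = d <;> simp [Function.update, h, hyz]
    rw [hset]
    by_cases h : P d r = z r
    · rw [Finset.card_erase_of_mem (by simp [h]), if_pos h, hm]
    · rw [Finset.erase_eq_of_notMem (by simp [h]), if_neg h, hm]
  have hμR : (0:ℝ) < μ := by exact_mod_cast hμ
  have hcardnot : (univ.filter fun i : Fin μ => ¬ (P i r = z r)).card = μ - m := by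
    have := Finset.card_filter_add_card_filter_not
      (s := (univ : Finset (Fin μ))) (p := fun i => P i r = z r)
    simp only [Finset.card_univ, Fintype.card_fin] at this
    omega
  -- sum for z
  have sumz : (∑ d : Fin μ, (Sr (Function.update P d z) r : ℝ)) =
      m * (2 * m * (μ - m)) + (μ - m) * (2 * (m + 1) * (μ - m - 1)) := by
    have hterm : ∀ d : Fin μ, (Sr (Function.update P d z) r : ℝ) =
        if P d r = z r then (2 * m * (μ - m) : ℝ) else 2 * (m + 1) * (μ - m - 1) := by
      intro d
      rw [sr_eq (Function.update P d z) r (z r), cntz d]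
      by_cases h : P d r = z r
      · rw [if_pos h, if_pos h]
        push_cast [Nat.cast_sub hmμ]
        ring
      · rw [if_neg h, if_neg h]
        have : m + 1 ≤ μ := by
          by_contra hc
          have : m = μ := by omega
          -- then all satisfy P i r = z r, contradiction with h
          have hall : (univ.filter fun i : Fin μ => P i r = z r) = univ := by
            apply Finset.eq_univ_of_card
            rw [← hm, this]; simp
          have hd : P d r = z r := by
            have := Finset.mem_filter.mp (hall ▸ Finset.mem_univ d)
            exact this.2
          exact h hd
        push_cast [Nat.cast_sub this]
        ring
    rw [Finset.sum_congr rfl (fun d _ => hterm d), Finset.sum_ite, Finset.sum_const,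
      Finset.sum_const, ← hm, hcardnot]
    simp only [nsmul_eq_mul]
    rw [Nat.cast_sub hmμ]
  -- sum for y
  have sumy : (∑ d : Fin μ, (Sr (Function.update P d y) r : ℝ)) =
      m * (2 * (m - 1) * (μ - m + 1)) + (μ - m) * (2 * m * (μ - m)) := by
    have hterm : ∀ d : Fin μ, (Sr (Function.update P d y) r : ℝ) =
        if P d r = z r then (2 * (m - 1) * (μ - m + 1) : ℝ) else 2 * m * (μ - m) := by
      intro d
      rw [sr_eq (Function.update P d y) r (z r), cnty d]
      by_cases h : P d r = z r
      · rw [if_pos h, if_pos h]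
        have hm1 : 1 ≤ m := by
          rw [hm]
          exact Finset.card_pos.mpr ⟨d, by simp [h]⟩
        have hsub : μ - (m - 1) = μ - m + 1 := by omega
        rw [hsub]
        push_cast [Nat.cast_sub hm1, Nat.cast_sub hmμ]
        ring
      · rw [if_neg h, if_neg h]
        push_cast [Nat.cast_sub hmμ]
        ring
    rw [Finset.sum_congr rfl (fun d _ => hterm d), Finset.sum_ite, Finset.sum_const,
      Finset.sum_const, ← hm, hcardnot]
    simp only [nsmul_eq_mul]
    rw [Nat.cast_sub hmμ]
  have hmR : (m : ℝ) ≤ μ := by exact_mod_cast hmμ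
  have hμne : (μ : ℝ) ≠ 0 := ne_of_gt hμR
  have heq : (∑ d : Fin μ, (Sr (Function.update P d z) r : ℝ)) / μ =
      (∑ d : Fin μ, (Sr (Function.update P d y) r : ℝ)) / μ +
        2 * μ - 4 * m * (1 - 1 / μ) - 2 := by
    rw [sumz, sumy]
    field_simp
    ring
  refine ⟨heq, ?_⟩
  rw [heq]
  have h1 : (0:ℝ) ≤ 1 - 1 / μ := by
    have : (1:ℝ)/μ ≤ 1 := by
      rw [div_le_one hμR]; exact_mod_cast hμ
    linarith
  have h3 : (m:ℝ) * (1 - 1/μ) ≤ μ * (1 - 1/μ) := mul_le_mul_of_nonneg_right hmR h1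
  have h4 : (μ:ℝ) * (1 - 1/μ) = μ - 1 := by field_simp
  linarith
end

section
/- Let n ≥ 1, k with 2 ≤ 2k ≤ n, and k ≤ √n/2, and let 1 ≤ d ≤ k. Define S_i = C(2d, i)/C(n, k+d−i) for 0 ≤ i ≤ 2d. Then for every 1 ≤ i ≤ 2d, S_i/S_{i−1} = ((2d−i+1)/(k+d−i+1)) · ((n−k−d+i)/i), and this ratio is at least 2. Consequently Σ_{i=0}^{2d} S_i ≤ 2·S_{2d} = 2/C(n, k−d). -/
open Finset


private lemma stmt_12_aux (n k d i : ℤ) (hk1 : 1 ≤ k) (hd1 : 1 ≤ d) (hdk : d ≤ k)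
    (hsq : 4 * k ^ 2 ≤ n) (hi1 : 1 ≤ i) (hi2 : i ≤ 2 * d) :
    2 * ((k + d - i + 1) * i) ≤ (2 * d - i + 1) * (n - (k + d) + i) := by
  have h4k : 4 * k ≤ n := by nlinarith
  have hfac : 0 ≤ (2 * d - i) * (n + k - d + 1 - i - 2 * d) := by
    apply mul_nonneg <;> linarith
  nlinarith [sq_nonneg (2 * d - k), mul_nonneg (sub_nonneg.2 hk1) (sub_nonneg.2 hdk),
    mul_nonneg (sub_nonneg.2 hk1) (sub_nonneg.2 hk1), hfac,
    mul_nonneg (sub_nonneg.2 hd1) (sub_nonneg.2 hdk)]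

set_option maxHeartbeats 1000000 in
theorem stmt_12 (n k d : ℕ) (hn : 1 ≤ n) (hk1 : 1 ≤ k) (h2k : 2 * k ≤ n)
    (hksqrt : (k : ℝ) ≤ Real.sqrt n / 2)
    (hd1 : 1 ≤ d) (hdk : d ≤ k)
    (hbig : ((k + 1) ^ 2 : ℕ) ≤ 2 * (n - k))
    (S : ℕ → ℝ)
    (hS : ∀ i, S i = (Nat.choose (2 * d) i : ℝ) / (Nat.choose n (k + d - i) : ℝ)) :
    (∀ i, 1 ≤ i → i ≤ 2 * d →
      S i / S (i - 1) =
        ((2 * d - i + 1 : ℕ) : ℝ) / ((k + d - i + 1 : ℕ) : ℝ) *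
          (((n - (k + d) + i : ℕ) : ℝ) / (i : ℝ)) ∧
      2 ≤ S i / S (i - 1)) ∧
    (∑ i ∈ Finset.range (2 * d + 1), S i) ≤ 2 * S (2 * d) ∧
    2 * S (2 * d) = 2 / (Nat.choose n (k - d) : ℝ) := by
  -- from hksqrt : n ≥ 4 k^2
  have hsq : 4 * k ^ 2 ≤ n := by
    have h1 : (2 * k : ℝ) ≤ Real.sqrt n := by linarith
    have h2 : ((4 * k ^ 2 : ℕ) : ℝ) ≤ (n : ℝ) := by
      have hs := Real.sq_sqrt (show (0:ℝ) ≤ (n:ℝ) by positivity)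
      have hnn := Real.sqrt_nonneg (n : ℝ)
      push_cast
      nlinarith
    exact_mod_cast h2
  have hSpos : ∀ i, i ≤ 2 * d → 0 < S i := by
    intro i hi
    rw [hS]
    apply div_pos
    · exact_mod_cast Nat.choose_pos hi
    · exact_mod_cast Nat.choose_pos (by omega : k + d - i ≤ n)
  have key : ∀ i, 1 ≤ i → i ≤ 2 * d →
      S i / S (i - 1) =
        ((2 * d - i + 1 : ℕ) : ℝ) / ((k + d - i + 1 : ℕ) : ℝ) *
          (((n - (k + d) + i : ℕ) : ℝ) / (i : ℝ)) ∧
      2 ≤ S i / S (i - 1) := by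
    intro i hi1 hi2
    have hikd : i ≤ k + d := by omega
    have hkdn : k + d ≤ n := by omega
    -- nat identities
    have e1 : Nat.choose (2 * d) i * i = Nat.choose (2 * d) (i - 1) * (2 * d - i + 1) := by
      have h := Nat.choose_succ_right_eq (2 * d) (i - 1)
      have h1 : i - 1 + 1 = i := by omega
      have h2 : 2 * d - (i - 1) = 2 * d - i + 1 := by omega
      rw [h1, h2] at h
      exact h
    have e2 : Nat.choose n (k + d - i + 1) * (k + d - i + 1)
        = Nat.choose n (k + d - i) * (n - (k + d) + i) := by
      have h := Nat.choose_succ_right_eq n (k + d - i)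
      have h2 : n - (k + d - i) = n - (k + d) + i := by omega
      rw [h2] at h
      exact h
    have hprev : k + d - (i - 1) = k + d - i + 1 := by omega
    -- positivity of everything
    have hc1 : (0:ℝ) < (Nat.choose (2 * d) i : ℝ) := by
      exact_mod_cast Nat.choose_pos hi2
    have hc0 : (0:ℝ) < (Nat.choose (2 * d) (i - 1) : ℝ) := by
      exact_mod_cast Nat.choose_pos (by omega : i - 1 ≤ 2 * d)
    have hcn : (0:ℝ) < (Nat.choose n (k + d - i) : ℝ) := by
      exact_mod_cast Nat.choose_pos (by omega : k + d - i ≤ n)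
    have hcn1 : (0:ℝ) < (Nat.choose n (k + d - i + 1) : ℝ) := by
      exact_mod_cast Nat.choose_pos (by omega : k + d - i + 1 ≤ n)
    have hiR : (0:ℝ) < (i : ℝ) := by exact_mod_cast hi1
    have hbR : (0:ℝ) < ((k + d - i + 1 : ℕ) : ℝ) := by
      exact_mod_cast Nat.succ_pos (k + d - i)
    -- real versions of identities
    have e1R : (Nat.choose (2 * d) i : ℝ) * (i : ℝ)
        = (Nat.choose (2 * d) (i - 1) : ℝ) * ((2 * d - i + 1 : ℕ) : ℝ) := by
      exact_mod_cast congrArg (Nat.cast : ℕ → ℝ) e1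
    have e2R : (Nat.choose n (k + d - i + 1) : ℝ) * ((k + d - i + 1 : ℕ) : ℝ)
        = (Nat.choose n (k + d - i) : ℝ) * ((n - (k + d) + i : ℕ) : ℝ) := by
      exact_mod_cast congrArg (Nat.cast : ℕ → ℝ) e2
    have hratio : S i / S (i - 1) =
        ((2 * d - i + 1 : ℕ) : ℝ) / ((k + d - i + 1 : ℕ) : ℝ) *
          (((n - (k + d) + i : ℕ) : ℝ) / (i : ℝ)) := by
      rw [hS i, hS (i - 1), hprev]
      have h1 : ((Nat.choose (2 * d) i : ℝ) / (Nat.choose n (k + d - i) : ℝ)) /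
          ((Nat.choose (2 * d) (i - 1) : ℝ) / (Nat.choose n (k + d - i + 1) : ℝ))
          = ((Nat.choose (2 * d) i : ℝ) * (Nat.choose n (k + d - i + 1) : ℝ)) /
            ((Nat.choose n (k + d - i) : ℝ) * (Nat.choose (2 * d) (i - 1) : ℝ)) := by
        field_simp
      rw [h1, div_mul_div_comm, div_eq_div_iff (by positivity) (by positivity)]
      linear_combination ((Nat.choose n (k + d - i + 1) : ℝ) * ((k + d - i + 1 : ℕ) : ℝ)) * e1R
        + ((Nat.choose (2 * d) (i - 1) : ℝ) * ((2 * d - i + 1 : ℕ) : ℝ)) * e2R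
    refine ⟨hratio, ?_⟩
    rw [hratio]
    -- nat inequality via integers
    have hnat : 2 * ((k + d - i + 1) * i) ≤ (2 * d - i + 1) * (n - (k + d) + i) := by
      zify [hikd, hkdn, hi2]
      exact stmt_12_aux n k d i (by exact_mod_cast hk1) (by exact_mod_cast hd1)
        (by exact_mod_cast hdk) (by exact_mod_cast hsq) (by exact_mod_cast hi1)
        (by exact_mod_cast hi2)
    have hnatR : 2 * (((k + d - i + 1 : ℕ) : ℝ) * (i : ℝ))
        ≤ ((2 * d - i + 1 : ℕ) : ℝ) * ((n - (k + d) + i : ℕ) : ℝ) := by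
      exact_mod_cast hnat
    rw [div_mul_div_comm, le_div_iff₀ (by positivity)]
    linarith
  refine ⟨key, ?_, ?_⟩
  · -- sum bound by induction
    have main : ∀ m, m ≤ 2 * d → (∑ i ∈ Finset.range (m + 1), S i) ≤ 2 * S m := by
      intro m
      induction m with
      | zero =>
        intro _
        norm_num
        nlinarith [hSpos 0 (by omega : 0 ≤ 2 * d)]
      | succ m ih =>
        intro hm
        have h2S : 2 * S m ≤ S (m + 1) := by
          obtain ⟨_, hge⟩ := key (m + 1) (by omega) hm
          have hp : 0 < S m := hSpos m (by omega)
          have hEq : m + 1 - 1 = m := by omega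
          rw [hEq] at hge
          calc 2 * S m ≤ S (m + 1) / S m * S m :=
                mul_le_mul_of_nonneg_right hge hp.le
            _ = S (m + 1) := by field_simp
        rw [Finset.sum_range_succ]
        have := ih (by omega)
        linarith
    exact main (2 * d) le_rfl
  · rw [hS (2 * d)]
    have h1 : k + d - 2 * d = k - d := by omega
    rw [h1, Nat.choose_self]
    norm_num
    rw [div_eq_mul_inv]
end
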